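/- arXiv:1312.2064 — 2 statements merged into one kernel-verified Lean document; each statement's English description precedes it below -/
import Mathlib

section
/- For every countable ordinal ξ, the lexicographic order ≤_lex on the space 2^ξ of functions from ξ to {0,1} admits no strictly increasing sequence of length ω₁; that is, there is no function f : ω₁ → 2^ξ such that α < β implies f(α) <_lex f(β). -/
/-!
Along a monotone `ω₁`-sequence in the lexicographic order on `ι → Bool`, every coordinate is
eventually constant, by well-founded induction on the coordinate: the countably many earlier
coordinates stabilise at a common stage, because `ω₁` has uncountable cofinality, and from that
stage on the next coordinate is monotone, hence eventually constant. For the same reason all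
coordinates then stabilise at a common stage, so the sequence cannot be strictly increasing.
-/

open Cardinal Filter Order Set

universe u v w

section
variable {α : Type u} [LinearOrder α] {ι : Type v}

theorem Order.nonempty_of_lift_mk_lt_lift_cof (hι : lift.{u} #ι < lift.{v} (cof α)) :
    Nonempty α :=
  cof_ne_zero_iff.1 <| lift_eq_zero.not.1 (hι.trans_le' bot_le).ne'

theorem Filter.eventually_all_atTop_of_lift_mk_lt_cof {p : ι → α → Prop}
    (hι : lift.{u} #ι < lift.{v} (cof α)) (hp : ∀ i, ∀ᶠ a in atTop, p i a) :
    ∀ᶠ a in atTop, ∀ i, p i a := by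
  have := nonempty_of_lift_mk_lt_lift_cof hι
  simp only [eventually_atTop] at hp ⊢
  choose g hg using hp
  have hbdd : ¬ IsCofinal (range g) := fun h ↦
    ((Cardinal.lift_le.2 (cof_le h)).trans mk_range_le_lift).not_gt hι
  obtain ⟨a, ha⟩ := not_isCofinal_iff.1 hbdd
  exact ⟨a, fun b hb i ↦ hg i b ((ha _ (mem_range_self i)).le.trans hb)⟩

theorem Filter.EventuallyConst.pi_atTop_of_lift_mk_lt_cof {β : ι → Type w} {g : α → ∀ i, β i}
    (hι : lift.{u} #ι < lift.{v} (cof α)) (hg : ∀ i, atTop.EventuallyConst fun a ↦ g a i) :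
    atTop.EventuallyConst g := by
  have := nonempty_of_lift_mk_lt_lift_cof hι
  have : ∀ i, Nonempty (β i) := fun i ↦ ⟨g (Classical.arbitrary α) i⟩
  simp only [eventuallyConst_iff_exists_eventuallyEq] at hg ⊢
  choose c hc using hg
  exact ⟨c, (eventually_all_atTop_of_lift_mk_lt_cof hι hc).mono fun a ha ↦ funext ha⟩

end

section
variable {α : Type u} [LinearOrder α] {ι : Type v} [LinearOrder ι] [WellFoundedLT ι]
  {β : ι → Type w} [∀ i, LinearOrder (β i)] {f : α → Lex (∀ i, β i)}

theorem Monotone.eventuallyConst_apply_of_lift_mk_lt_cof (hf : Monotone f)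
    (hι : lift.{u} #ι < lift.{v} (cof α)) (hβ : ∀ i, lift.{u} #(β i) < lift.{w} (cof α))
    (i : ι) : atTop.EventuallyConst fun a ↦ ofLex (f a) i := by
  induction i using WellFoundedLT.induction with | ind i ih => ?_
  have := nonempty_of_lift_mk_lt_lift_cof hι
  have hIio : lift.{u} #(Iio i) < lift.{v} (cof α) :=
    (Cardinal.lift_le.2 (mk_set_le _)).trans_lt hι
  obtain ⟨a₀, ha₀⟩ := eventuallyConst_atTop.1 <|
    EventuallyConst.pi_atTop_of_lift_mk_lt_cof hIio fun j : Iio i ↦ ih j j.2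
  have hmono : Monotone fun a ↦ ofLex (f (max a a₀)) i := fun a b hab ↦
    Pi.apply_le_of_toLex (hf (max_le_max_right a₀ hab)) fun j hj ↦
      (congrFun (ha₀ _ (le_max_right a a₀)) ⟨j, hj⟩).trans
        (congrFun (ha₀ _ (le_max_right b a₀)) ⟨j, hj⟩).symm
  refine (EventuallyConst.of_monotone_of_lt_cof hmono (hβ i)).congr ?_
  filter_upwards [eventually_ge_atTop a₀] with a ha
  rw [max_eq_left ha]

theorem Monotone.eventuallyConst_of_lift_mk_lt_cof (hf : Monotone f)
    (hι : lift.{u} #ι < lift.{v} (cof α)) (hβ : ∀ i, lift.{u} #(β i) < lift.{w} (cof α)) :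
    atTop.EventuallyConst f :=
  EventuallyConst.pi_atTop_of_lift_mk_lt_cof hι (hf.eventuallyConst_apply_of_lift_mk_lt_cof hι hβ)

theorem not_strictMono_of_lift_mk_lt_cof [NoMaxOrder α]
    (hι : lift.{u} #ι < lift.{v} (cof α)) (hβ : ∀ i, lift.{u} #(β i) < lift.{w} (cof α)) :
    ¬ StrictMono f := fun hf ↦ by
  have := nonempty_of_lift_mk_lt_lift_cof hι
  obtain ⟨a, ha⟩ := eventuallyConst_atTop.1 (hf.monotone.eventuallyConst_of_lift_mk_lt_cof hι hβ)
  obtain ⟨b, hab⟩ := exists_gt a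
  exact (hf hab).ne (ha b hab.le).symm

end

theorem Cardinal.lift_mk_lt_cof_Iio_ord_aleph_one {ι : Type v} [Countable ι] :
    lift.{u + 1} #ι < lift.{v} (cof (Iio (aleph.{u} 1).ord)) := by
  rw [Ordinal.cof_Iio, ← Ordinal.lift_cof, isRegular_aleph_one.cof_ord]
  simp

/-- For every countable ordinal (represented as a countable well-ordered type `ι`),
the lexicographic order on `ι → Bool` admits no strictly increasing ω₁-sequence. -/
theorem stmt_0 {ι : Type} [LinearOrder ι] [WellFoundedLT ι] [Countable ι]
    (ltLex : (ι → Bool) → (ι → Bool) → Prop)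
    (hLex : ∀ x y, ltLex x y ↔ ∃ γ : ι, x γ < y γ ∧ ∀ δ, δ < γ → x δ = y δ) :
    ¬ ∃ f : Set.Iio (Cardinal.aleph 1).ord → (ι → Bool),
        ∀ α β : Set.Iio (Cardinal.aleph 1).ord, α < β → ltLex (f α) (f β) := by
  rintro ⟨f, hf⟩
  have := (isSuccLimit_ord (aleph0_le_aleph 1)).isSuccPrelimit.noMaxOrder_Iio
  refine not_strictMono_of_lift_mk_lt_cof (f := toLex ∘ f)
    lift_mk_lt_cof_Iio_ord_aleph_one (fun _ ↦ lift_mk_lt_cof_Iio_ord_aleph_one) fun a b hab ↦ ?_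
  obtain ⟨γ, hlt, heq⟩ := (hLex _ _).1 (hf a b hab)
  exact ⟨γ, heq, hlt⟩
end

section
/- For every countable ordinal ξ, every subset X of 2^ξ is countably cofinal with respect to the lexicographic order: there is a countable subset C ⊆ X such that every x ∈ X satisfies x ≤_lex c for some c ∈ C. -/
/-!
Over a well-ordered index set, the lexicographic supremum `s` of `X ⊆ ι → Bool` can be built
greedily: `s γ = true` iff some member of `X` agrees with `s` below `γ` and is `true` at `γ`.
Every `x ∈ X` other than `s` first differs from `s` at a place `γ` with `x γ = false` and
`s γ = true`, so `x` lies lexicographically below the member of `X` witnessing `s γ = true`.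
One witness per `γ`, together with `s` itself when `s ∈ X`, gives a countable cofinal subset.
-/

variable {ι : Type*} [LT ι] [WellFoundedLT ι]

open Classical in
noncomputable def lexSup (X : Set (ι → Bool)) : ι → Bool :=
  WellFoundedLT.fix fun γ s => decide (∃ x ∈ X, (∀ δ (h : δ < γ), x δ = s δ h) ∧ x γ = true)

open Classical in
theorem lexSup_eq_true_iff {X : Set (ι → Bool)} {γ : ι} :
    lexSup X γ = true ↔ ∃ x ∈ X, (∀ δ < γ, x δ = lexSup X δ) ∧ x γ = true := by
  rw [lexSup, WellFoundedLT.fix_eq, decide_eq_true_eq]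

theorem exists_lt_lexSup_of_ne {X : Set (ι → Bool)} {x : ι → Bool} (hx : x ∈ X)
    (hne : x ≠ lexSup X) : ∃ γ, x γ < lexSup X γ ∧ ∀ δ < γ, x δ = lexSup X δ := by
  obtain ⟨γ, hγ, hmin⟩ :=
    wellFounded_lt.has_min {δ | x δ ≠ lexSup X δ} (Function.ne_iff.1 hne)
  have hagree : ∀ δ < γ, x δ = lexSup X δ := fun δ hδ => not_not.1 fun h => hmin δ h hδ
  have hmono : x γ = true → lexSup X γ = true := fun h =>
    lexSup_eq_true_iff.2 ⟨x, hx, hagree, h⟩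
  refine ⟨γ, Bool.lt_iff.2 ?_, hagree⟩
  cases hxγ : x γ <;> simp_all

/-- For every countable ordinal (a countable well-ordered type `ι`), every subset `X` of
`ι → Bool` is countably cofinal with respect to the lexicographic order. -/
theorem stmt_1 {ι : Type} [LinearOrder ι] [WellFoundedLT ι] [Countable ι]
    (leLex : (ι → Bool) → (ι → Bool) → Prop)
    (hLex : ∀ x y, leLex x y ↔ x = y ∨ ∃ γ : ι, x γ < y γ ∧ ∀ δ, δ < γ → x δ = y δ)
    (X : Set (ι → Bool)) :
    ∃ C : Set (ι → Bool), C ⊆ X ∧ C.Countable ∧ ∀ x ∈ X, ∃ c ∈ C, leLex x c := by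
  set s := lexSup X
  have hwitness (γ : {γ // s γ = true}) :
      ∃ c ∈ X, (∀ δ < γ.1, c δ = s δ) ∧ c γ.1 = true :=
    lexSup_eq_true_iff.1 γ.2
  choose c hcX hc using hwitness
  refine ⟨Set.range c ∪ ({s} ∩ X), ?_, ?_, fun x hx => ?_⟩
  · exact Set.union_subset (Set.range_subset_iff.2 hcX) Set.inter_subset_right
  · exact (Set.countable_range c).union ((Set.countable_singleton s).mono Set.inter_subset_left)
  by_cases hxs : x = s
  · exact ⟨x, Or.inr ⟨hxs, hx⟩, (hLex x x).2 (Or.inl rfl)⟩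
  obtain ⟨γ, hlt, hagree⟩ := exists_lt_lexSup_of_ne hx hxs
  have hsγ : s γ = true := (Bool.lt_iff.1 hlt).2
  obtain ⟨hbelow, hat⟩ := hc ⟨γ, hsγ⟩
  refine ⟨c ⟨γ, hsγ⟩, Or.inl ⟨_, rfl⟩, (hLex _ _).2 (Or.inr ⟨γ, ?_, fun δ hδ => ?_⟩)⟩
  · rwa [hat, ← hsγ]
  · rw [hagree δ hδ, hbelow δ hδ]
end
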